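/- Let G be a finite group generated by elements g₁,…,g_m. Then every element of G can be computed from g₁,…,g_m by a straight-line program of length at most (1 + log₂|G|)². -/

import Mathlib

/-- An entry of a straight-line program over the group operations, with
generators indexed by `Fin m`. Non-generator entries refer to earlier
positions of the program by natural-number indices. -/
inductive GEntry (m : ℕ) where
  | gen : Fin m → GEntry m
  | mul : ℕ → ℕ → GEntry m
  | inv : ℕ → GEntry m
  | one : GEntry m

/-- The list of positions referenced by an entry. -/
def GEntry.refs {m : ℕ} : GEntry m → List ℕ
  | .gen _ => []
  | .mul i j => [i, j]
  | .inv i => [i]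
  | .one => []

/-- One step of evaluation: the value of an entry, given the generators `g`
and the list `acc` of previously computed values. -/
def GEntry.step {G : Type} [Group G] {m : ℕ} (g : Fin m → G) (acc : List G) :
    GEntry m → G
  | .gen i => g i
  | .mul i j => acc.getD i 1 * acc.getD j 1
  | .inv i => (acc.getD i 1)⁻¹
  | .one => 1

/-- The sequence of elements of `G` computed by a straight-line program. -/
def runSLP {G : Type} [Group G] {m : ℕ} (g : Fin m → G) (L : List (GEntry m)) :
    List G :=
  L.foldl (fun acc u => acc ++ [GEntry.step g acc u]) []

/-- A straight-line program is valid if every entry refers only to strictly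
earlier positions. -/
def ValidSLP {m : ℕ} (L : List (GEntry m)) : Prop :=
  ∀ (i : ℕ) (hi : i < L.length), ∀ j ∈ (L.get ⟨i, hi⟩).refs, j < i

/-!
Following Babai and Szemerédi, grow a list `h₁, …, h_s` of computed elements whose cube
`K = {h₁^ε₁ ⋯ h_s^ε_s}` has `2 ^ s` distinct elements. If `K⁻¹K ≠ G`, then, `G` being finite and
generated by the `gⱼ`, some `z = d gⱼ` with `d ∈ K⁻¹K` lies outside `K⁻¹K`; then `K` and `Kz` are
disjoint, so `h_{s+1} := z` doubles the cube. Writing `d = A⁻¹B` with subproducts `A`, `B` without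
a common first factor, `z` costs at most `2s + 1` new entries, so the program has length `≤ s²`,
and `2 ^ s ≤ |G|` forces the process to stop with `K⁻¹K = G`. Every `h ∈ K⁻¹K` is then the last
entry after `≤ 2s + 1` further steps, in total `≤ (s + 1)² ≤ (1 + log₂ |G|)²`.
-/

open Pointwise Set
open scoped List

section Run

variable {G : Type} [Group G] {m : ℕ}

theorem runSLP_append_singleton (g : Fin m → G) (L : List (GEntry m)) (e : GEntry m) :
    runSLP g (L ++ [e]) = runSLP g L ++ [e.step g (runSLP g L)] := by
  simp [runSLP, List.foldl_append]

theorem length_runSLP (g : Fin m → G) (L : List (GEntry m)) :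
    (runSLP g L).length = L.length := by
  induction L using List.reverseRecOn with
  | nil => rfl
  | append_singleton L e ih => simp [runSLP_append_singleton, ih]

theorem ValidSLP.append_singleton {L : List (GEntry m)} (hL : ValidSLP L) {e : GEntry m}
    (he : ∀ j ∈ e.refs, j < L.length) : ValidSLP (L ++ [e]) := by
  intro i hi j hj
  rw [List.length_append, List.length_singleton] at hi
  rcases Nat.lt_succ_iff_lt_or_eq.mp hi with hi | rfl
  · simp only [List.get_eq_getElem, List.getElem_append_left hi] at hj
    exact hL i hi j hj
  · simp only [List.get_eq_getElem, List.getElem_concat_length] at hj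
    exact he j hj

/-- Reasoning about the traces of valid programs, rather than the programs, hides the bookkeeping
of positions. -/
def IsSLPRun (g : Fin m → G) (V : List G) : Prop :=
  ∃ L : List (GEntry m), ValidSLP L ∧ runSLP g L = V

namespace IsSLPRun

variable {g : Fin m → G} {V : List G}

theorem nil : IsSLPRun g [] :=
  ⟨[], fun i hi => absurd hi (Nat.not_lt_zero i), rfl⟩

theorem append_step (hV : IsSLPRun g V) {e : GEntry m} (he : ∀ j ∈ e.refs, j < V.length) :
    IsSLPRun g (V ++ [e.step g V]) := by
  obtain ⟨L, hL, rfl⟩ := hV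
  exact ⟨L ++ [e], hL.append_singleton (length_runSLP g L ▸ he), runSLP_append_singleton g L e⟩

theorem append_mul (hV : IsSLPRun g V) {x y : G} (hx : x ∈ V) (hy : y ∈ V) :
    IsSLPRun g (V ++ [x * y]) := by
  obtain ⟨i, hi, rfl⟩ := List.getElem_of_mem hx
  obtain ⟨j, hj, rfl⟩ := List.getElem_of_mem hy
  simpa [GEntry.step, hi, hj] using hV.append_step (e := .mul i j) (by simp [GEntry.refs, hi, hj])

theorem append_inv (hV : IsSLPRun g V) {x : G} (hx : x ∈ V) : IsSLPRun g (V ++ [x⁻¹]) := by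
  obtain ⟨i, hi, rfl⟩ := List.getElem_of_mem hx
  simpa [GEntry.step, hi] using hV.append_step (e := .inv i) (by simp [GEntry.refs, hi])

theorem append_of_eq_one_or_mem_range (hV : IsSLPRun g V) {y : G} (hy : y = 1 ∨ y ∈ range g) :
    IsSLPRun g (V ++ [y]) := by
  rcases hy with rfl | ⟨j, rfl⟩
  · exact hV.append_step (e := .one) (by simp [GEntry.refs])
  · exact hV.append_step (e := .gen j) (by simp [GEntry.refs])

theorem exists_prod_mem (hV : IsSLPRun g V) {l : List G} (hl : l ≠ []) (hlV : ∀ x ∈ l, x ∈ V) :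
    ∃ W, W.length + 1 = l.length ∧ IsSLPRun g (V ++ W) ∧ l.prod ∈ V ++ W := by
  induction l with
  | nil => contradiction
  | cons a t ih =>
    have ha : a ∈ V := hlV a List.mem_cons_self
    rcases eq_or_ne t [] with rfl | ht
    · exact ⟨[], rfl, by simpa using hV, by simpa using ha⟩
    obtain ⟨W, hlen, hW, ht⟩ := ih ht fun x hx => hlV x (List.mem_cons_of_mem a hx)
    refine ⟨W ++ [a * t.prod], by simp [hlen], ?_, by simp⟩
    rw [← List.append_assoc]
    exact hW.append_mul (List.mem_append_left W ha) ht

end IsSLPRun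

end Run

section Cube

variable {G : Type} [Group G]

/-- The cube `K(h₁, …, h_s) = {h₁^ε₁ ⋯ h_s^ε_s | εᵢ ∈ {0, 1}}` of Babai and Szemerédi. -/
def cube (l : List G) : Set G := {x | ∃ s, s <+ l ∧ s.prod = x}

theorem one_mem_cube (l : List G) : (1 : G) ∈ cube l :=
  ⟨[], List.nil_sublist l, List.prod_nil⟩

theorem cube_append_singleton (l : List G) (z : G) :
    cube (l ++ [z]) = cube l ∪ (· * z) '' cube l := by
  ext x
  constructor
  · rintro ⟨s, hs, rfl⟩
    obtain ⟨s₁, s₂, rfl, h₁, h₂⟩ := List.sublist_append_iff.mp hs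
    rcases List.sublist_singleton.mp h₂ with rfl | rfl
    · exact Or.inl ⟨s₁, h₁, by simp⟩
    · exact Or.inr ⟨s₁.prod, ⟨s₁, h₁, rfl⟩, by simp⟩
  · rintro (⟨s, hs, rfl⟩ | ⟨_, ⟨s, hs, rfl⟩, rfl⟩)
    · exact ⟨s, hs.trans (List.sublist_append_left l [z]), rfl⟩
    · exact ⟨s ++ [z], hs.append (List.Sublist.refl [z]), by simp⟩

theorem ncard_cube_append_singleton [Finite G] {l : List G} {z : G}
    (hz : z ∉ (cube l)⁻¹ * cube l) :
    (cube (l ++ [z])).ncard = 2 * (cube l).ncard := by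
  have hdisj : Disjoint (cube l) ((· * z) '' cube l) := by
    rw [Set.disjoint_right]
    rintro _ ⟨y, hy, rfl⟩ hyz
    exact hz ⟨y⁻¹, by simpa using hy, y * z, hyz, by group⟩
  rw [cube_append_singleton, Set.ncard_union_eq hdisj,
    Set.ncard_image_of_injective _ (mul_left_injective z), two_mul]

/-- Cancelling a common first factor of `α` and `β` is what keeps every step of the construction
within `2 s + 1` new entries. -/
theorem exists_sublist_inv_prod_mul_prod_eq {l α β : List G} (hα : α <+ l) (hβ : β <+ l) :
    ∃ α' β', α' <+ l ∧ β' <+ l ∧ α'.prod⁻¹ * β'.prod = α.prod⁻¹ * β.prod ∧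
      (α' = [] ∨ α'.length + β'.length < 2 * l.length) := by
  induction l generalizing α β with
  | nil => exact ⟨α, β, hα, hβ, rfl, Or.inl (List.sublist_nil.mp hα)⟩
  | cons a t ih =>
    rcases List.sublist_cons_iff.mp hα with hαt | ⟨α₁, rfl, hα₁⟩
    · refine ⟨α, β, hα, hβ, rfl, Or.inr ?_⟩
      have := hαt.length_le; have := hβ.length_le
      simp only [List.length_cons] at *; omega
    rcases List.sublist_cons_iff.mp hβ with hβt | ⟨β₁, rfl, hβ₁⟩
    · refine ⟨_, β, hα, hβ, rfl, Or.inr ?_⟩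
      have := hα₁.length_le; have := hβt.length_le
      simp only [List.length_cons] at *; omega
    obtain ⟨α', β', hα', hβ', heq, hlen⟩ := ih hα₁ hβ₁
    refine ⟨α', β', hα'.cons a, hβ'.cons a, by simp [heq, mul_assoc], ?_⟩
    exact hlen.imp_right fun h => by simp only [List.length_cons]; omega

end Cube

theorem Set.eq_univ_of_forall_mul_mem {G : Type} [Group G] [Finite G] {s S : Set G}
    (hs : Subgroup.closure s = ⊤) (hS : S.Nonempty) (hmul : ∀ x ∈ S, ∀ a ∈ s, x * a ∈ S) :
    S = univ := by
  let stab : Submonoid G :=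
    { carrier := {y | ∀ x ∈ S, x * y ∈ S}
      one_mem' := fun x hx => by simpa using hx
      mul_mem' := fun ha hb x hx => mul_assoc x _ _ ▸ hb _ (ha x hx) }
  have hstab : ∀ y, y ∈ stab := by
    intro y
    have : Submonoid.closure s ≤ stab := Submonoid.closure_le.mpr fun a ha x hx => hmul x hx a ha
    apply this
    rw [← Subgroup.closure_toSubmonoid_of_finite, hs]
    trivial
  obtain ⟨x, hx⟩ := hS
  exact eq_univ_of_forall fun y => by simpa using hstab (x⁻¹ * y) x hx

namespace IsSLPRun

variable {G : Type} [Group G] {m : ℕ} {g : Fin m → G} {V : List G}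

theorem exists_mem_of_mem_cube_quotient (hV : IsSLPRun g V) {l : List G} (hlV : ∀ x ∈ l, x ∈ V)
    {d : G} (hd : d ∈ (cube l)⁻¹ * cube l) (hd₁ : d ≠ 1) :
    ∃ W, W.length < 2 * l.length ∧ IsSLPRun g (V ++ W) ∧ d ∈ V ++ W := by
  obtain ⟨a, ⟨α₀, hα₀, hA⟩, _, ⟨β₀, hβ₀, rfl⟩, hd⟩ := hd
  obtain ⟨α, β, hα, hβ, hαβ, hlen⟩ := exists_sublist_inv_prod_mul_prod_eq hα₀ hβ₀
  obtain rfl : d = α.prod⁻¹ * β.prod := by rw [hαβ, hA, inv_inv, ← hd]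
  have hαV : ∀ x ∈ α, x ∈ V := fun x hx => hlV x (hα.subset hx)
  have hβV : ∀ x ∈ β, x ∈ V := fun x hx => hlV x (hβ.subset hx)
  rcases eq_or_ne α [] with rfl | hα₁
  · have hβ₁ : β ≠ [] := by rintro rfl; simp at hd₁
    obtain ⟨W, hWlen, hW, hB⟩ := hV.exists_prod_mem hβ₁ hβV
    refine ⟨W, ?_, hW, by simpa using hB⟩
    have := hβ.length_le
    omega
  obtain ⟨W₁, hW₁len, hW₁, hA⟩ := hV.exists_prod_mem hα₁ hαV
  have hW₁' := hW₁.append_inv hA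
  obtain ⟨W₂, hW₂len, hW₂, hAB⟩ := hW₁'.exists_prod_mem (l := α.prod⁻¹ :: β) (List.cons_ne_nil _ _)
    (by simpa using fun x hx => Or.inl (hβV x hx))
  refine ⟨W₁ ++ [α.prod⁻¹] ++ W₂, ?_, by simpa using hW₂, by simpa using hAB⟩
  simp only [List.length_append, List.length_cons, List.length_nil] at hW₁len hW₂len ⊢
  have := hlen.resolve_left hα₁
  omega

theorem exists_getLast_eq_mul (hV : IsSLPRun g V) {l : List G} (hlV : ∀ x ∈ l, x ∈ V)
    {d : G} (hd : d ∈ (cube l)⁻¹ * cube l) {y : G} (hy : y = 1 ∨ y ∈ range g) :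
    ∃ W, W.length ≤ 2 * l.length + 1 ∧ IsSLPRun g (V ++ W) ∧
      (V ++ W).getLast? = some (d * y) := by
  rcases eq_or_ne d 1 with rfl | hd₁
  · exact ⟨[y], by simp, hV.append_of_eq_one_or_mem_range hy, by simp⟩
  obtain ⟨W, hWlen, hW, hdW⟩ := hV.exists_mem_of_mem_cube_quotient hlV hd hd₁
  have hWy := hW.append_of_eq_one_or_mem_range hy
  refine ⟨W ++ [y, d * y], by simp; omega, ?_, by simp⟩
  simpa using hWy.append_mul (List.mem_append_left _ hdW) (by simp)

end IsSLPRun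

section Construction

variable {G : Type} [Group G] [Finite G] {m : ℕ} (g : Fin m → G)

/-- The invariant of the construction, with `l = [h₁, …, h_s]`. -/
structure IsCubeRun (V l : List G) : Prop where
  isSLPRun : IsSLPRun g V
  subset : ∀ x ∈ l, x ∈ V
  length_le : V.length ≤ l.length ^ 2
  two_pow_le_ncard : 2 ^ l.length ≤ (cube l).ncard

theorem isCubeRun_nil : IsCubeRun g [] [] :=
  ⟨IsSLPRun.nil, by simp, le_rfl, (Set.ncard_pos (Set.toFinite _)).mpr ⟨1, one_mem_cube []⟩⟩

variable {g}

theorem IsCubeRun.exists_append_singleton (hgen : Subgroup.closure (range g) = ⊤)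
    {V l : List G} (hVl : IsCubeRun g V l) (hK : (cube l)⁻¹ * cube l ≠ univ) :
    ∃ V' z, IsCubeRun g V' (l ++ [z]) := by
  obtain ⟨d, hd, _, ⟨j, rfl⟩, hz⟩ : ∃ d ∈ (cube l)⁻¹ * cube l, ∃ a ∈ range g,
      d * a ∉ (cube l)⁻¹ * cube l := by
    by_contra! h
    exact hK (eq_univ_of_forall_mul_mem hgen ⟨1, 1, by simpa using one_mem_cube l, 1,
      one_mem_cube l, one_mul 1⟩ h)
  obtain ⟨W, hWlen, hW, hlast⟩ :=
    hVl.isSLPRun.exists_getLast_eq_mul hVl.subset hd (Or.inr ⟨j, rfl⟩)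
  refine ⟨V ++ W, d * g j, hW, ?_, ?_, ?_⟩
  · simp only [List.mem_append (s := l), List.mem_singleton]
    rintro x (hx | rfl)
    · exact List.mem_append_left W (hVl.subset x hx)
    · exact List.mem_of_getLast? hlast
  · simp only [List.length_append, List.length_singleton]
    have := hVl.length_le
    nlinarith
  · rw [ncard_cube_append_singleton hz, List.length_append, List.length_singleton, pow_succ]
    have := hVl.two_pow_le_ncard
    omega

theorem IsCubeRun.two_pow_le_card {V l : List G} (hVl : IsCubeRun g V l) :
    2 ^ l.length ≤ Nat.card G :=
  hVl.two_pow_le_ncard.trans (Set.ncard_le_card _)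

theorem exists_isCubeRun_cube_quotient_eq_univ (hgen : Subgroup.closure (range g) = ⊤) :
    ∃ V l, IsCubeRun g V l ∧ (cube l)⁻¹ * cube l = univ := by
  have key : ∀ n, ∃ V l, IsCubeRun g V l ∧ (n ≤ l.length ∨ (cube l)⁻¹ * cube l = univ) := by
    intro n
    induction n with
    | zero => exact ⟨[], [], isCubeRun_nil g, Or.inl le_rfl⟩
    | succ n ih =>
      obtain ⟨V, l, hVl, hnK⟩ := ih
      by_cases hK : (cube l)⁻¹ * cube l = univ
      · exact ⟨V, l, hVl, Or.inr hK⟩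
      obtain ⟨V', z, hV'⟩ := hVl.exists_append_singleton hgen hK
      exact ⟨V', l ++ [z], hV', Or.inl (by simpa using hnK.resolve_right hK)⟩
  obtain ⟨V, l, hVl, hn | hK⟩ := key (Nat.card G)
  · exact absurd hVl.two_pow_le_card (hn.trans_lt Nat.lt_two_pow_self).not_ge
  · exact ⟨V, l, hVl, hK⟩

end Construction

/-- **Reachability Lemma (Babai–Szemerédi).**  If a finite group `G` is
generated by `g 0, …, g (m-1)`, then every element of `G` is computed from the
generators by a (nonempty, valid) straight-line program of length at most
`(1 + log₂ |G|)²`. -/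
theorem reachability_lemma {G : Type} [Group G] [Finite G] {m : ℕ}
    (g : Fin m → G) (hgen : Subgroup.closure (Set.range g) = ⊤) :
    ∀ h : G, ∃ L : List (GEntry m), L ≠ [] ∧ ValidSLP L ∧
      (runSLP g L).getLast? = some h ∧
      (L.length : ℝ) ≤ (1 + Real.logb 2 (Nat.card G)) ^ 2 := by
  intro h
  obtain ⟨V, l, hVl, hK⟩ := exists_isCubeRun_cube_quotient_eq_univ hgen
  obtain ⟨W, hWlen, ⟨L, hL, hrun⟩, hlast⟩ :=
    hVl.isSLPRun.exists_getLast_eq_mul hVl.subset (hK ▸ mem_univ h) (Or.inl rfl)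
  rw [mul_one, ← hrun] at hlast
  have hlen : L.length ≤ (l.length + 1) ^ 2 := by
    rw [← length_runSLP g L, hrun, List.length_append]
    nlinarith [hVl.length_le]
  have hlog : (l.length : ℝ) ≤ Real.logb 2 (Nat.card G) := by
    rw [Real.le_logb_iff_rpow_le one_lt_two (by exact_mod_cast Nat.card_pos), Real.rpow_natCast]
    exact_mod_cast hVl.two_pow_le_card
  refine ⟨L, ?_, hL, hlast, ?_⟩
  · rintro rfl
    simp [runSLP] at hlast
  · calc (L.length : ℝ) ≤ (1 + (l.length : ℝ)) ^ 2 := by rw [add_comm]; exact_mod_cast hlen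
      _ ≤ (1 + Real.logb 2 (Nat.card G)) ^ 2 := by gcongr
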